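/- arXiv:2401.14445 — 3 statements merged into one kernel-verified Lean document; each statement's English description precedes it below -/
import Mathlib

section
/- Let K be a compact, metrizable topological space and let (Z_k) be a sequence of connected subsets of K. Then there exists a strictly increasing sequence of indices (k_j) such that the set W of subsequential limit points of (Z_{k_j}) — that is, the Kuratowski upper limit W := {x ∈ K : every neighborhood of x intersects Z_{k_j} for infinitely many j} — is preconnected. -/
open Metric EMetric TopologicalSpace Set Filter

/-- Kuratowski upper limit of a sequence of sets: points every neighborhood of which
intersects `A j` for infinitely many `j`. -/
def kurLimsup {Z : Type*} [TopologicalSpace Z] (A : ℕ → Set Z) : Set Z :=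
  {z | ∀ U ∈ nhds z, ∃ᶠ j in Filter.atTop, (U ∩ A j).Nonempty}

/-- Given a sequence of connected subsets of a compact metrizable space, one can pass to a
subsequence whose set of subsequential limit points (its Kuratowski upper limit) is
preconnected. -/
theorem exists_subseq_kurLimsup_preconnected
    {K : Type*} [TopologicalSpace K] [CompactSpace K] [TopologicalSpace.MetrizableSpace K]
    (Z : ℕ → Set K) (hZ : ∀ k, IsConnected (Z k)) :
    ∃ φ : ℕ → ℕ, StrictMono φ ∧ IsPreconnected (kurLimsup (fun j => Z (φ j))) := by
  letI : MetricSpace K := TopologicalSpace.metrizableSpaceMetric K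
  have hZne : ∀ k, (Z k).Nonempty := fun k => (hZ k).nonempty
  set F : ℕ → NonemptyCompacts K := fun k =>
    ⟨⟨closure (Z k), isClosed_closure.isCompact⟩, (hZne k).closure⟩ with hF
  obtain ⟨C, -, φ, hφ, hconv⟩ := isCompact_univ.tendsto_subseq (fun n => Set.mem_univ (F n))
  refine ⟨φ, hφ, ?_⟩
  have hCne : (C : Set K).Nonempty := C.nonempty
  have hfin : ∀ j, hausdorffEdist (Z (φ j)) (C : Set K) ≠ ⊤ := fun j =>
    hausdorffEdist_ne_top_of_nonempty_of_bounded (hZne _) hCne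
      isBounded_of_compactSpace isBounded_of_compactSpace
  -- distance control
  have hd : ∀ ε > (0 : ℝ), ∀ᶠ j in atTop, hausdorffDist (Z (φ j)) (C : Set K) < ε := by
    intro ε hε
    have := (Metric.tendsto_atTop.1 hconv) ε hε
    obtain ⟨N, hN⟩ := this
    refine eventually_atTop.2 ⟨N, fun j hj => ?_⟩
    have := hN j hj
    rw [NonemptyCompacts.dist_eq] at this
    simpa [hF, hausdorffDist_closure₁] using this
  -- Step 1: kurLimsup = C
  have heq : kurLimsup (fun j => Z (φ j)) = (C : Set K) := by
    apply Set.Subset.antisymm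
    · -- ⊆
      intro x hx
      by_contra hxC
      have hC : IsClosed (C : Set K) := C.isCompact.isClosed
      have hr : 0 < infDist x (C : Set K) :=
        (hC.notMem_iff_infDist_pos hCne).1 hxC
      set r := infDist x (C : Set K)
      have hball : Metric.ball x (r/2) ∈ nhds x := ball_mem_nhds x (by linarith)
      have hfreq := hx _ hball
      have hev := hd (r/4) (by linarith)
      obtain ⟨j, ⟨z, hz1, hz2⟩, hj1⟩ := (hfreq.and_eventually hev).exists
      -- z ∈ ball x (r/2) ∩ Z (φ j), hausdorffDist < r/4
      have : infDist z (C : Set K) ≤ hausdorffDist (Z (φ j)) (C : Set K) :=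
        infDist_le_hausdorffDist_of_mem hz2 (hfin j)
      have h1 : infDist z (C : Set K) < r/4 := lt_of_le_of_lt this hj1
      have h2 : r ≤ infDist z (C : Set K) + dist x z :=
        infDist_le_infDist_add_dist
      have h3 : dist x z < r/2 := by
        rw [dist_comm]; simpa [Metric.mem_ball] using hz1
      linarith
    · -- ⊇
      intro x hx U hU
      obtain ⟨ε, hε, hball⟩ := Metric.mem_nhds_iff.1 hU
      have hev := hd (ε/2) (by linarith)
      refine ((hev.mono ?_)).frequently
      intro j hj
      obtain ⟨y, hy, hxy⟩ := exists_dist_lt_of_hausdorffDist_lt' hx hj (hfin j)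
      have : y ∈ Metric.ball x ε := by
        rw [Metric.mem_ball]
        linarith
      exact ⟨y, hball this, hy⟩
  rw [heq]
  -- Step 2: C is preconnected
  rw [isPreconnected_iff_subset_of_fully_disjoint_closed C.isCompact.isClosed]
  intro A B hAcl hBcl hsub hdisj
  by_contra hcon
  push_neg at hcon
  obtain ⟨hnsubA, hnsubB⟩ := hcon
  -- both pieces are nonempty
  have hAne : ((C : Set K) ∩ A).Nonempty := by
    rcases Set.not_subset.1 hnsubB with ⟨x, hxC, hxB⟩
    exact ⟨x, hxC, (hsub hxC).resolve_right hxB⟩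
  have hBne : ((C : Set K) ∩ B).Nonempty := by
    rcases Set.not_subset.1 hnsubA with ⟨x, hxC, hxA⟩
    exact ⟨x, hxC, (hsub hxC).resolve_left hxA⟩
  set A' := (C : Set K) ∩ A with hA'
  set B' := (C : Set K) ∩ B with hB'
  have hA'cp : IsCompact A' := C.isCompact.inter_right hAcl
  have hB'cl : IsClosed B' := C.isCompact.isClosed.inter hBcl
  have hdisj' : Disjoint A' B' :=
    (hdisj.mono inf_le_right inf_le_right)
  obtain ⟨δ, hδ, hthick⟩ := hdisj'.exists_thickenings hA'cp hB'cl
  have hCunion : (C : Set K) = A' ∪ B' := by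
    rw [hA', hB', ← Set.inter_union_distrib_left]
    exact (Set.inter_eq_left.2 hsub).symm
  obtain ⟨j, hj⟩ := (hd δ hδ).exists
  -- Z (φ j) ⊆ thickening δ A' ∪ thickening δ B'
  have hsubZ : Z (φ j) ⊆ thickening δ A' ∪ thickening δ B' := by
    intro z hz
    have h1 : infDist z (C : Set K) ≤ hausdorffDist (Z (φ j)) (C : Set K) :=
      infDist_le_hausdorffDist_of_mem hz (hfin j)
    have h2 : z ∈ thickening δ (C : Set K) :=
      (mem_thickening_iff_infDist_lt hCne).2 (lt_of_le_of_lt h1 hj)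
    rwa [hCunion, thickening_union] at h2
  have hmeets : ∀ S : Set K, ((C : Set K) ∩ S).Nonempty →
      (Z (φ j) ∩ thickening δ ((C : Set K) ∩ S)).Nonempty := by
    rintro S ⟨a, haC, haS⟩
    obtain ⟨z, hz, hza⟩ := exists_dist_lt_of_hausdorffDist_lt' haC hj
      (by rw [hausdorffEdist_comm]; exact fun h => hfin j (by rwa [hausdorffEdist_comm] at h))
    exact ⟨z, hz, mem_thickening_iff.2 ⟨a, ⟨haC, haS⟩, hza⟩⟩
  have hmA : (Z (φ j) ∩ thickening δ A').Nonempty := hmeets A hAne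
  have hmB : (Z (φ j) ∩ thickening δ B').Nonempty := hmeets B hBne
  have := (hZ (φ j)).isPreconnected _ _ isOpen_thickening isOpen_thickening hsubZ hmA hmB
  obtain ⟨z, -, hz1, hz2⟩ := this
  exact (hthick.le_bot ⟨hz1, hz2⟩)
end

section
/- Let Z be a compact metric space and let φ be a continuous flow on Z (a continuous action of the additive group ℝ on Z). Let Λ ⊆ Z be a nonempty compact invariant set that is locally maximal, i.e. there exists an open set U ⊇ Λ such that every compact invariant set Λ' ⊆ U satisfies Λ' ⊆ Λ. Let 𝒵 be any subset of the space of nonempty compact invariant subsets of Z, equipped with the Hausdorff metric, such that 𝒵 is connected and Λ ∈ 𝒵. Then Λ is maximal with respect to inclusion in 𝒵: every Λ' ∈ 𝒵 with Λ ⊆ Λ' satisfies Λ' = Λ. -/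
open Set TopologicalSpace

/-!
For an open `U ⊇ Λ` witnessing local maximality, the family of compact sets contained in `Λ` is
closed and the family of those contained in `U` is open for the Hausdorff metric. On invariant
sets the two families coincide, so their trace on `𝒵` is clopen in `𝒵`; it contains `Λ`, hence by
connectedness it is all of `𝒵`, and every `K ∈ 𝒵` lies inside `Λ`.
-/

theorem IsPreconnected.subset_of_inter_isClosed_eq_inter_isOpen {α : Type*} [TopologicalSpace α]
    {s t u : Set α} (hs : IsPreconnected s) (ht : IsClosed t) (hu : IsOpen u)
    (htu : s ∩ t ⊆ u) (hut : s ∩ u ⊆ t) (hne : (s ∩ t).Nonempty) : s ⊆ t := by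
  by_contra hst
  obtain ⟨x, hxs, hxt⟩ := not_subset.1 hst
  obtain ⟨y, hys, hyt⟩ := hne
  have hcover : s ⊆ u ∪ tᶜ := fun z hz => (em (z ∈ t)).imp (fun h => htu ⟨hz, h⟩) id
  obtain ⟨z, hzs, hzu, hzt⟩ :=
    hs u tᶜ hu ht.isOpen_compl hcover ⟨y, hys, htu ⟨hys, hyt⟩⟩ ⟨x, hxs, hxt⟩
  exact hzt (hut ⟨hzs, hzu⟩)

theorem locallyMaximal_is_maximal_in_connected_family_general
    {Z : Type*} [MetricSpace Z]
    (φ : Flow ℝ Z)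
    (Λ : TopologicalSpace.NonemptyCompacts Z)
    (hmax : ∃ U : Set Z, IsOpen U ∧ (Λ : Set Z) ⊆ U ∧
      ∀ Λ' : Set Z, IsCompact Λ' → (∀ t : ℝ, φ t '' Λ' = Λ') → Λ' ⊆ U → Λ' ⊆ (Λ : Set Z))
    (𝒵 : Set (TopologicalSpace.NonemptyCompacts Z))
    (h𝒵inv : ∀ K ∈ 𝒵, ∀ t : ℝ, φ t '' (K : Set Z) = (K : Set Z))
    (h𝒵conn : IsConnected 𝒵)
    (hΛmem : Λ ∈ 𝒵) :
    ∀ K ∈ 𝒵, (Λ : Set Z) ⊆ (K : Set Z) → K = Λ := by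
  obtain ⟨U, hUopen, hΛU, hU⟩ := hmax
  have h𝒵_subset_Λ : ∀ K ∈ 𝒵, (K : Set Z) ⊆ Λ :=
    h𝒵conn.isPreconnected.subset_of_inter_isClosed_eq_inter_isOpen
      (NonemptyCompacts.isClosed_subsets_of_isClosed Λ.isCompact.isClosed)
      (NonemptyCompacts.isOpen_subsets_of_isOpen hUopen)
      (fun _ hK => Subset.trans hK.2 hΛU)
      (fun K hK => hU K K.isCompact (h𝒵inv K hK.1) hK.2)
      ⟨Λ, hΛmem, Subset.rfl⟩
  intro K hK hΛK
  exact NonemptyCompacts.ext (subset_antisymm (h𝒵_subset_Λ K hK) hΛK)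

/-- Conley-type lemma: a locally maximal compact invariant set of a continuous flow on a
compact metric space is maximal with respect to inclusion in any connected family (for the
Hausdorff metric) of nonempty compact invariant sets containing it. -/
theorem locallyMaximal_is_maximal_in_connected_family
    {Z : Type*} [MetricSpace Z] [CompactSpace Z]
    (φ : Flow ℝ Z)
    (Λ : TopologicalSpace.NonemptyCompacts Z)
    (hΛinv : ∀ t : ℝ, φ t '' (Λ : Set Z) = (Λ : Set Z))
    (hmax : ∃ U : Set Z, IsOpen U ∧ (Λ : Set Z) ⊆ U ∧
      ∀ Λ' : Set Z, IsCompact Λ' → (∀ t : ℝ, φ t '' Λ' = Λ') → Λ' ⊆ U → Λ' ⊆ (Λ : Set Z))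
    (𝒵 : Set (TopologicalSpace.NonemptyCompacts Z))
    (h𝒵inv : ∀ K ∈ 𝒵, ∀ t : ℝ, φ t '' (K : Set Z) = (K : Set Z))
    (h𝒵conn : IsConnected 𝒵)
    (hΛmem : Λ ∈ 𝒵) :
    ∀ K ∈ 𝒵, (Λ : Set Z) ⊆ (K : Set Z) → K = Λ :=
  locallyMaximal_is_maximal_in_connected_family_general φ Λ hmax 𝒵 h𝒵inv h𝒵conn hΛmem
end

section
/- Let Y be a compact metric space and let φ be a continuous flow on Y (a continuous action of the additive group ℝ on Y). Let Λ ⊊ Y be a proper closed invariant set (φ_t(Λ) = Λ for all t ∈ ℝ) which is not locally maximal, meaning: for every open set U ⊇ Λ there exists a compact invariant set Λ' ⊆ U with Λ' ⊄ Λ. Then the complement Y \ Λ is not minimal: there exists a point z ∈ Y \ Λ whose orbit {φ_t(z) : t ∈ ℝ} is not dense in Y \ Λ. -/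
/-- If `Λ` is a proper closed invariant set of a continuous flow `φ` on a compact metric
space and `Λ` is not locally maximal, then the complement of `Λ` is not minimal: some point
of the complement has non-dense orbit `{φ_t z : t ∈ ℝ}` in the complement. -/
theorem not_locallyMaximal_implies_complement_not_minimal_flow
    {Y : Type*} [MetricSpace Y] [CompactSpace Y]
    (φ : Flow ℝ Y)
    (Λ : Set Y) (hclosed : IsClosed Λ) (hproper : Λ ≠ Set.univ)
    (hinv : ∀ t : ℝ, φ t '' Λ = Λ)
    (hnotmax : ∀ U : Set Y, IsOpen U → Λ ⊆ U →
      ∃ Λ' : Set Y, IsCompact Λ' ∧ (∀ t : ℝ, φ t '' Λ' = Λ') ∧ Λ' ⊆ U ∧ ¬ Λ' ⊆ Λ) :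
    ∃ z ∈ Λᶜ, ¬ (Λᶜ ⊆ closure {y | ∃ t : ℝ, φ t z = y}) := by
  by_contra h
  push_neg at h
  -- pick a point p outside Λ
  obtain ⟨p, hp⟩ : ∃ p, p ∉ Λ := by
    by_contra hc
    push_neg at hc
    exact hproper (Set.eq_univ_of_forall hc)
  obtain ⟨ε, hε, hball⟩ := Metric.isOpen_iff.mp hclosed.isOpen_compl p hp
  set U : Set Y := (Metric.closedBall p (ε / 2))ᶜ with hU
  have hUopen : IsOpen U := Metric.isClosed_closedBall.isOpen_compl
  have hΛU : Λ ⊆ U := by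
    intro x hx hxball
    exact hball (Metric.mem_ball.mpr (lt_of_le_of_lt (Metric.mem_closedBall.mp hxball) (by linarith))) hx
  obtain ⟨Λ', hcomp, hinv', hsub, hnotsub⟩ := hnotmax U hUopen hΛU
  obtain ⟨q, hqΛ', hqΛ⟩ := Set.not_subset.mp hnotsub
  -- orbit of q stays in Λ'
  have horb : {y | ∃ t : ℝ, φ t q = y} ⊆ Λ' := by
    rintro y ⟨t, rfl⟩
    rw [← hinv' t]
    exact Set.mem_image_of_mem _ hqΛ'
  have hcl : closure {y | ∃ t : ℝ, φ t q = y} ⊆ Λ' :=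
    closure_minimal horb hcomp.isClosed
  have hdense := h q hqΛ
  have hpΛ' : p ∈ Λ' := hcl (hdense hp)
  exact hsub hpΛ' (Metric.mem_closedBall_self (by linarith))
end
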